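/- In Palais's example, the action of ℝ restricted to the invariant open set Y = {(x,y) : −1 < x ≤ 1} is proper, and likewise the action restricted to Z = {(x,y) : −1 ≤ x < 1} is proper. -/

import Mathlib

noncomputable section

/-- The curve `y = x²/(1-x²)` of Palais's example. -/
def palaisCurve (x : ℝ) : ℝ := x ^ 2 / (1 - x ^ 2)

/-- The strip `X = [-1,1] × ℝ`. -/
def palaisStrip : Set (ℝ × ℝ) := {p | -1 ≤ p.1 ∧ p.1 ≤ 1}

/-- Signed arc length along a vertical translate of the curve `y = x²/(1-x²)`,
measured between the `x`-coordinates `x₀` and `x₁`. -/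
def palaisArc (x₀ x₁ : ℝ) : ℝ := ∫ u in x₀..x₁, Real.sqrt (1 + deriv palaisCurve u ^ 2)

/-- The right half-open strip `Y = (-1,1] × ℝ`. -/
def palaisY : Set (ℝ × ℝ) := {p | -1 < p.1 ∧ p.1 ≤ 1}

/-- The left half-open strip `Z = [-1,1) × ℝ`. -/
def palaisZ : Set (ℝ × ℝ) := {p | -1 ≤ p.1 ∧ p.1 < 1}

lemma palais_hasDerivAt {u : ℝ} (hu : -1 < u) (hu' : u < 1) :
    HasDerivAt palaisCurve (2 * u / (1 - u ^ 2) ^ 2) u := by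
  have h : 1 - u ^ 2 ≠ 0 := by nlinarith
  have H := (hasDerivAt_pow 2 u).div ((hasDerivAt_const u 1).sub (hasDerivAt_pow 2 u)) h
  refine H.congr_deriv ?_
  simp only [Pi.sub_apply, Nat.cast_ofNat]
  field_simp
  ring

lemma palais_deriv {u : ℝ} (hu : -1 < u) (hu' : u < 1) :
    deriv palaisCurve u = 2 * u / (1 - u ^ 2) ^ 2 := (palais_hasDerivAt hu hu').deriv

lemma palaisCurve_nonneg {a : ℝ} (h : -1 ≤ a) (h' : a ≤ 1) : 0 ≤ palaisCurve a :=
  div_nonneg (sq_nonneg a) (by nlinarith)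

lemma palaisCurve_le {x a : ℝ} (h : x ^ 2 ≤ a ^ 2) (ha : a ^ 2 < 1) :
    palaisCurve x ≤ palaisCurve a := by
  unfold palaisCurve
  rw [div_le_div_iff₀ (by nlinarith) (by nlinarith)]
  nlinarith

/-- The derivative `2u/(1-u²)²` of the Palais curve. -/
def palaisG (s : ℝ) : ℝ := 2 * s / (1 - s ^ 2) ^ 2

lemma palaisG_contOn {u v : ℝ} (hu : -1 < u) (hv : v < 1) :
    ContinuousOn palaisG (Set.Icc u v) := by
  apply ContinuousOn.div (by fun_prop) (by fun_prop)
  intro x hx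
  have : 1 - x ^ 2 ≠ 0 := by nlinarith [hx.1, hx.2]
  positivity

lemma palaisG_integrable {u v : ℝ} (hu : -1 < u) (hv : v < 1) (huv : u ≤ v) :
    IntervalIntegrable palaisG MeasureTheory.volume u v := by
  apply ContinuousOn.intervalIntegrable
  rw [Set.uIcc_of_le huv]; exact palaisG_contOn hu hv

lemma palais_ftc {u v : ℝ} (hu : -1 < u) (hv : v < 1) (huv : u ≤ v) :
    ∫ s in u..v, palaisG s = palaisCurve v - palaisCurve u := by
  apply intervalIntegral.integral_eq_sub_of_hasDerivAt
  · intro x hx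
    rw [Set.uIcc_of_le huv] at hx
    exact palais_hasDerivAt (lt_of_lt_of_le hu hx.1) (lt_of_le_of_lt hx.2 hv)
  · exact palaisG_integrable hu hv huv

lemma palais_absG {u v : ℝ} (hu : -1 < u) (hv : v < 1) (huv : u ≤ v)
    {M L : ℝ} (hM : 0 ≤ M) (hL : 0 ≤ L)
    (hF : |palaisCurve v - palaisCurve u| ≤ M)
    (hmix : u < 0 → 0 < v → palaisCurve u ≤ L ∨ palaisCurve v ≤ L) :
    ∫ s in u..v, |palaisG s| ≤ 2 * L + M := by
  rcases le_or_gt 0 u with h0 | h0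
  · have : ∫ s in u..v, |palaisG s| = ∫ s in u..v, palaisG s := by
      apply intervalIntegral.integral_congr
      intro s hs
      rw [Set.uIcc_of_le huv] at hs
      have hs0 : 0 ≤ s := le_trans h0 hs.1
      have h1 : (0:ℝ) ≤ palaisG s := div_nonneg (by linarith) (by positivity)
      exact abs_of_nonneg h1
    rw [this, palais_ftc hu hv huv]
    have := abs_le.mp hF
    linarith
  rcases le_or_gt v 0 with h1 | h1
  · have : ∫ s in u..v, |palaisG s| = ∫ s in u..v, -palaisG s := by
      apply intervalIntegral.integral_congr
      intro s hs
      rw [Set.uIcc_of_le huv] at hs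
      have hs0 : s ≤ 0 := le_trans hs.2 h1
      have h2 : palaisG s ≤ 0 :=
        div_nonpos_of_nonpos_of_nonneg (by linarith) (by positivity)
      exact abs_of_nonpos h2
    rw [this, intervalIntegral.integral_neg, palais_ftc hu hv huv]
    have := abs_le.mp hF
    linarith
  · have habs_int : ∀ a b : ℝ, -1 < a → b < 1 → a ≤ b →
        IntervalIntegrable (fun s => |palaisG s|) MeasureTheory.volume a b := by
      intro a b ha hb hab
      apply ContinuousOn.intervalIntegrable
      rw [Set.uIcc_of_le hab]
      exact (palaisG_contOn ha hb).abs
    have hsplit := intervalIntegral.integral_add_adjacent_intervals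
      (habs_int u 0 hu (by norm_num) h0.le) (habs_int 0 v (by norm_num) hv h1.le)
    have e1 : ∫ s in u..(0:ℝ), |palaisG s| = palaisCurve u := by
      have : ∫ s in u..(0:ℝ), |palaisG s| = ∫ s in u..(0:ℝ), -palaisG s := by
        apply intervalIntegral.integral_congr
        intro s hs
        rw [Set.uIcc_of_le h0.le] at hs
        exact abs_of_nonpos (div_nonpos_of_nonpos_of_nonneg (by linarith [hs.2]) (by positivity))
      rw [this, intervalIntegral.integral_neg, palais_ftc hu (by norm_num) h0.le]
      simp [palaisCurve]
    have e2 : ∫ s in (0:ℝ)..v, |palaisG s| = palaisCurve v := by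
      have : ∫ s in (0:ℝ)..v, |palaisG s| = ∫ s in (0:ℝ)..v, palaisG s := by
        apply intervalIntegral.integral_congr
        intro s hs
        rw [Set.uIcc_of_le h1.le] at hs
        exact abs_of_nonneg (div_nonneg (by linarith [hs.1]) (by positivity))
      rw [this, palais_ftc (by norm_num) hv h1.le]
      simp [palaisCurve]
    rw [← hsplit, e1, e2]
    have := abs_le.mp hF
    rcases hmix h0 h1 with h | h <;> linarith

lemma palaisArc_bound' {x₀ x₁ M L : ℝ} (h₀ : -1 < x₀) (h₁ : x₁ < 1) (hle : x₀ ≤ x₁)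
    (hM : 0 ≤ M) (hL : 0 ≤ L)
    (hF : |palaisCurve x₁ - palaisCurve x₀| ≤ M)
    (hmix : x₀ < 0 → 0 < x₁ → palaisCurve x₀ ≤ L ∨ palaisCurve x₁ ≤ L) :
    |palaisArc x₀ x₁| ≤ (x₁ - x₀) + (2 * L + M) := by
  have hIcc := Set.uIcc_of_le hle
  have key : palaisArc x₀ x₁ = ∫ u in x₀..x₁, Real.sqrt (1 + palaisG u ^ 2) := by
    apply intervalIntegral.integral_congr
    intro s hs
    rw [hIcc] at hs
    simp only []
    rw [palais_deriv (lt_of_lt_of_le h₀ hs.1) (lt_of_le_of_lt hs.2 h₁)]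
    rfl
  have hnn : 0 ≤ palaisArc x₀ x₁ := by
    rw [key]
    apply intervalIntegral.integral_nonneg hle
    intro s _
    positivity
  rw [abs_of_nonneg hnn, key]
  have hint1 : IntervalIntegrable (fun u => Real.sqrt (1 + palaisG u ^ 2))
      MeasureTheory.volume x₀ x₁ := by
    apply ContinuousOn.intervalIntegrable
    rw [hIcc]
    exact Real.continuous_sqrt.comp_continuousOn
      (continuousOn_const.add ((palaisG_contOn h₀ h₁).pow 2))
  have hint2 : IntervalIntegrable (fun u => 1 + |palaisG u|)
      MeasureTheory.volume x₀ x₁ := by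
    apply ContinuousOn.intervalIntegrable
    rw [hIcc]
    exact continuousOn_const.add (palaisG_contOn h₀ h₁).abs
  have step1 : (∫ u in x₀..x₁, Real.sqrt (1 + palaisG u ^ 2)) ≤
      ∫ u in x₀..x₁, (1 + |palaisG u|) := by
    apply intervalIntegral.integral_mono_on hle hint1 hint2
    intro s _
    have h2 : 1 + palaisG s ^ 2 ≤ (1 + |palaisG s|) ^ 2 := by
      nlinarith [abs_nonneg (palaisG s), sq_abs (palaisG s)]
    calc Real.sqrt (1 + palaisG s ^ 2) ≤ Real.sqrt ((1 + |palaisG s|) ^ 2) :=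
          Real.sqrt_le_sqrt h2
      _ = 1 + |palaisG s| := Real.sqrt_sq (by positivity)
  have step2 : (∫ u in x₀..x₁, (1 + |palaisG u|)) =
      (x₁ - x₀) + ∫ u in x₀..x₁, |palaisG u| := by
    rw [intervalIntegral.integral_add intervalIntegrable_const (by
      apply ContinuousOn.intervalIntegrable
      rw [hIcc]; exact (palaisG_contOn h₀ h₁).abs)]
    simp
  have step3 := palais_absG h₀ h₁ hle hM hL hF hmix
  linarith

lemma palaisArc_bound {x₀ x₁ M L : ℝ} (h₀ : -1 < x₀) (h₀' : x₀ < 1)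
    (h₁ : -1 < x₁) (h₁' : x₁ < 1)
    (hM : 0 ≤ M) (hL : 0 ≤ L)
    (hF : |palaisCurve x₁ - palaisCurve x₀| ≤ M)
    (hmix : (x₀ < 0 ∧ 0 < x₁) ∨ (x₁ < 0 ∧ 0 < x₀) →
      palaisCurve x₀ ≤ L ∨ palaisCurve x₁ ≤ L) :
    |palaisArc x₀ x₁| ≤ 2 + 2 * L + M := by
  rcases le_total x₀ x₁ with hle | hle
  · have h2 : x₁ - x₀ ≤ 2 := by linarith
    linarith [palaisArc_bound' h₀ h₁' hle hM hL hF (fun ha hb => hmix (Or.inl ⟨ha, hb⟩))]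
  · have hsymm : palaisArc x₀ x₁ = -palaisArc x₁ x₀ := intervalIntegral.integral_symm x₁ x₀
    rw [hsymm, abs_neg]
    have hF' : |palaisCurve x₀ - palaisCurve x₁| ≤ M := by rwa [abs_sub_comm]
    have h2 : x₀ - x₁ ≤ 2 := by linarith
    linarith [palaisArc_bound' h₁ h₀' hle hM hL hF'
      (fun ha hb => (hmix (Or.inr ⟨ha, hb⟩)).symm)]

lemma proper_aux {S : Set (ℝ × ℝ)} (f : ℝ × ↥S → ↥S × ↥S)
    (hf : Continuous f) (hsnd : ∀ q, (f q).2 = q.2)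
    (hbd : ∀ K : Set (↥S × ↥S), IsCompact K → ∃ C, ∀ q, f q ∈ K → |q.1| ≤ C) :
    IsProperMap f := by
  rw [isProperMap_iff_isCompact_preimage]
  refine ⟨hf, fun K hK => ?_⟩
  obtain ⟨C, hC⟩ := hbd K hK
  refine IsCompact.of_isClosed_subset
    ((isCompact_Icc (a := -C) (b := C)).prod (hK.image continuous_snd))
    (hK.isClosed.preimage hf) ?_
  rintro ⟨t, p⟩ hq
  exact ⟨abs_le.mp (hC _ hq), ⟨f (t, p), hq, hsnd _⟩⟩

set_option maxHeartbeats 2000000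

/-- In Palais's example the restriction of the `ℝ`-action to each of the invariant
open sets `Y = (-1,1] × ℝ` and `Z = [-1,1) × ℝ` is proper. -/
theorem palais_restricted_actions_proper
    (φ : ℝ → ℝ × ℝ → ℝ × ℝ)
    (hcont : Continuous fun q : ℝ × (ℝ × ℝ) => φ q.1 q.2)
    (hzero : ∀ p, φ 0 p = p)
    (hadd : ∀ s t p, φ (s + t) p = φ s (φ t p))
    (hmem : ∀ (t : ℝ) (p : ℝ × ℝ), p ∈ palaisStrip → φ t p ∈ palaisStrip)
    (hright : ∀ t y : ℝ, φ t (1, y) = (1, y + t))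
    (hleft : ∀ t y : ℝ, φ t (-1, y) = (-1, y - t))
    (hint : ∀ t x₀ y₀ : ℝ, |x₀| < 1 →
      |(φ t (x₀, y₀)).1| < 1 ∧
      (φ t (x₀, y₀)).2 - palaisCurve (φ t (x₀, y₀)).1 = y₀ - palaisCurve x₀ ∧
      palaisArc x₀ (φ t (x₀, y₀)).1 = t)
    (hY : ∀ (t : ℝ) (p : ℝ × ℝ), p ∈ palaisY → φ t p ∈ palaisY)
    (hZ : ∀ (t : ℝ) (p : ℝ × ℝ), p ∈ palaisZ → φ t p ∈ palaisZ) :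
    IsProperMap (fun q : ℝ × ↥palaisY =>
        ((⟨φ q.1 (q.2 : ℝ × ℝ), hY q.1 q.2 q.2.2⟩ : ↥palaisY), q.2)) ∧
    IsProperMap (fun q : ℝ × ↥palaisZ =>
        ((⟨φ q.1 (q.2 : ℝ × ℝ), hZ q.1 q.2 q.2.2⟩ : ↥palaisZ), q.2)) := by
  have hφcont : ∀ (S : Set (ℝ × ℝ)), Continuous (fun q : ℝ × ↥S => φ q.1 (q.2 : ℝ × ℝ)) := by
    intro S
    exact hcont.comp (continuous_fst.prodMk (continuous_subtype_val.comp continuous_snd))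
  constructor
  · -- the Y part
    apply proper_aux
    · exact ((hφcont palaisY).subtype_mk _).prodMk continuous_snd
    · intro q; rfl
    · intro K hK
      rcases K.eq_empty_or_nonempty with rfl | hne
      · exact ⟨0, fun q h => absurd h (Set.notMem_empty _)⟩
      have hxmc : Continuous (fun z : ↥palaisY × ↥palaisY =>
          min (z.1 : ℝ × ℝ).1 (z.2 : ℝ × ℝ).1) := by fun_prop
      have hymc : Continuous (fun z : ↥palaisY × ↥palaisY =>
          max |(z.1 : ℝ × ℝ).2| |(z.2 : ℝ × ℝ).2|) := by fun_prop
      set A := (fun z : ↥palaisY × ↥palaisY => min (z.1 : ℝ × ℝ).1 (z.2 : ℝ × ℝ).1) '' K with hA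
      set a := sInf A with ha
      have hAc : IsCompact A := hK.image hxmc
      have haA : a ∈ A := hAc.sInf_mem (hne.image _)
      have ha1 : -1 < a := by
        obtain ⟨z, hz, hzz⟩ := haA
        rw [← hzz]; exact lt_min z.1.2.1 z.2.2.1
      have ha2 : a ≤ 1 := by
        obtain ⟨z, hz, hzz⟩ := haA
        rw [← hzz]; exact le_trans (min_le_left _ _) z.1.2.2
      have halb : ∀ z ∈ K, a ≤ (z.1 : ℝ × ℝ).1 ∧ a ≤ (z.2 : ℝ × ℝ).1 := by
        intro z hz
        have := csInf_le hAc.bddBelow ⟨z, hz, rfl⟩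
        exact ⟨le_trans this (min_le_left _ _), le_trans this (min_le_right _ _)⟩
      set B := sSup ((fun z : ↥palaisY × ↥palaisY =>
          max |(z.1 : ℝ × ℝ).2| |(z.2 : ℝ × ℝ).2|) '' K) with hB
      have hBub : ∀ z ∈ K, |(z.1 : ℝ × ℝ).2| ≤ B ∧ |(z.2 : ℝ × ℝ).2| ≤ B := by
        intro z hz
        have := le_csSup (hK.image hymc).bddAbove ⟨z, hz, rfl⟩
        exact ⟨le_trans (le_max_left _ _) this, le_trans (le_max_right _ _) this⟩
      have hL : 0 ≤ palaisCurve a := palaisCurve_nonneg ha1.le ha2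
      refine ⟨2 + 2 * palaisCurve a + 2 * B, ?_⟩
      rintro ⟨t, p⟩ hq
      have hq1 : a ≤ (φ t (p : ℝ × ℝ)).1 := (halb _ hq).1
      have hq2 : a ≤ (p : ℝ × ℝ).1 := (halb _ hq).2
      have hy1 : |(φ t (p : ℝ × ℝ)).2| ≤ B := (hBub _ hq).1
      have hy0 : |(p : ℝ × ℝ).2| ≤ B := (hBub _ hq).2
      have hB0 : 0 ≤ B := le_trans (abs_nonneg _) hy0
      obtain ⟨hx0a, hx0b⟩ := p.2
      rcases eq_or_lt_of_le hx0b with heq | hlt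
      · -- boundary point x₀ = 1
        have hpe : (p : ℝ × ℝ) = ((1 : ℝ), (p : ℝ × ℝ).2) := by
          rw [Prod.ext_iff]; exact ⟨heq, rfl⟩
        rw [hpe, hright] at hy1
        simp only at hy1
        have h1 := abs_le.mp hy1
        have h2 := abs_le.mp hy0
        rw [abs_le]
        constructor <;> linarith
      · -- interior point
        have hx0abs : |(p : ℝ × ℝ).1| < 1 := abs_lt.mpr ⟨hx0a, hlt⟩
        obtain ⟨hx1abs, hrel, harc⟩ := hint t (p : ℝ × ℝ).1 (p : ℝ × ℝ).2 hx0abs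
        rw [Prod.mk.eta] at hx1abs hrel harc
        have hx1 := abs_lt.mp hx1abs
        have h1 := abs_le.mp hy1
        have h2 := abs_le.mp hy0
        have hF : |palaisCurve (φ t (p : ℝ × ℝ)).1 - palaisCurve (p : ℝ × ℝ).1| ≤ 2 * B := by
          rw [abs_le]
          constructor <;> nlinarith [hrel]
        have hmix : ((p : ℝ × ℝ).1 < 0 ∧ 0 < (φ t (p : ℝ × ℝ)).1) ∨
            ((φ t (p : ℝ × ℝ)).1 < 0 ∧ 0 < (p : ℝ × ℝ).1) →
            palaisCurve (p : ℝ × ℝ).1 ≤ palaisCurve a ∨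
            palaisCurve (φ t (p : ℝ × ℝ)).1 ≤ palaisCurve a := by
          rintro (⟨hneg, -⟩ | ⟨hneg, -⟩)
          · left
            have hmul : (0:ℝ) ≤ ((p : ℝ × ℝ).1 - a) * (-((p : ℝ × ℝ).1 + a)) :=
              mul_nonneg (by linarith) (by linarith)
            exact palaisCurve_le (by nlinarith) (by nlinarith)
          · right
            have hmul : (0:ℝ) ≤ ((φ t (p : ℝ × ℝ)).1 - a) * (-((φ t (p : ℝ × ℝ)).1 + a)) :=
              mul_nonneg (by linarith) (by linarith)
            exact palaisCurve_le (by nlinarith) (by nlinarith)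
        have := palaisArc_bound hx0a hlt hx1.1 hx1.2 (by linarith) hL hF hmix
        rw [harc] at this
        exact this
  · -- the Z part
    apply proper_aux
    · exact ((hφcont palaisZ).subtype_mk _).prodMk continuous_snd
    · intro q; rfl
    · intro K hK
      rcases K.eq_empty_or_nonempty with rfl | hne
      · exact ⟨0, fun q h => absurd h (Set.notMem_empty _)⟩
      have hxmc : Continuous (fun z : ↥palaisZ × ↥palaisZ =>
          max (z.1 : ℝ × ℝ).1 (z.2 : ℝ × ℝ).1) := by fun_prop
      have hymc : Continuous (fun z : ↥palaisZ × ↥palaisZ =>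
          max |(z.1 : ℝ × ℝ).2| |(z.2 : ℝ × ℝ).2|) := by fun_prop
      set A := (fun z : ↥palaisZ × ↥palaisZ => max (z.1 : ℝ × ℝ).1 (z.2 : ℝ × ℝ).1) '' K with hA
      set b := sSup A with hb
      have hAc : IsCompact A := hK.image hxmc
      have hbA : b ∈ A := hAc.sSup_mem (hne.image _)
      have hb1 : b < 1 := by
        obtain ⟨z, hz, hzz⟩ := hbA
        rw [← hzz]; exact max_lt z.1.2.2 z.2.2.2
      have hb2 : -1 ≤ b := by
        obtain ⟨z, hz, hzz⟩ := hbA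
        rw [← hzz]; exact le_trans z.1.2.1 (le_max_left _ _)
      have hub : ∀ z ∈ K, (z.1 : ℝ × ℝ).1 ≤ b ∧ (z.2 : ℝ × ℝ).1 ≤ b := by
        intro z hz
        have := le_csSup hAc.bddAbove ⟨z, hz, rfl⟩
        exact ⟨le_trans (le_max_left _ _) this, le_trans (le_max_right _ _) this⟩
      set B := sSup ((fun z : ↥palaisZ × ↥palaisZ =>
          max |(z.1 : ℝ × ℝ).2| |(z.2 : ℝ × ℝ).2|) '' K) with hB
      have hBub : ∀ z ∈ K, |(z.1 : ℝ × ℝ).2| ≤ B ∧ |(z.2 : ℝ × ℝ).2| ≤ B := by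
        intro z hz
        have := le_csSup (hK.image hymc).bddAbove ⟨z, hz, rfl⟩
        exact ⟨le_trans (le_max_left _ _) this, le_trans (le_max_right _ _) this⟩
      have hL : 0 ≤ palaisCurve b := palaisCurve_nonneg hb2 hb1.le
      refine ⟨2 + 2 * palaisCurve b + 2 * B, ?_⟩
      rintro ⟨t, p⟩ hq
      have hq1 : (φ t (p : ℝ × ℝ)).1 ≤ b := (hub _ hq).1
      have hq2 : (p : ℝ × ℝ).1 ≤ b := (hub _ hq).2
      have hy1 : |(φ t (p : ℝ × ℝ)).2| ≤ B := (hBub _ hq).1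
      have hy0 : |(p : ℝ × ℝ).2| ≤ B := (hBub _ hq).2
      have hB0 : 0 ≤ B := le_trans (abs_nonneg _) hy0
      obtain ⟨hx0a, hx0b⟩ := p.2
      rcases eq_or_lt_of_le hx0a with heq | hlt
      · -- boundary point x₀ = -1
        have hpe : (p : ℝ × ℝ) = ((-1 : ℝ), (p : ℝ × ℝ).2) := by
          rw [Prod.ext_iff]; exact ⟨heq.symm, rfl⟩
        rw [hpe, hleft] at hy1
        simp only at hy1
        have h1 := abs_le.mp hy1
        have h2 := abs_le.mp hy0
        rw [abs_le]
        constructor <;> linarith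
      · -- interior point
        have hx0abs : |(p : ℝ × ℝ).1| < 1 := abs_lt.mpr ⟨hlt, hx0b⟩
        obtain ⟨hx1abs, hrel, harc⟩ := hint t (p : ℝ × ℝ).1 (p : ℝ × ℝ).2 hx0abs
        rw [Prod.mk.eta] at hx1abs hrel harc
        have hx1 := abs_lt.mp hx1abs
        have h1 := abs_le.mp hy1
        have h2 := abs_le.mp hy0
        have hF : |palaisCurve (φ t (p : ℝ × ℝ)).1 - palaisCurve (p : ℝ × ℝ).1| ≤ 2 * B := by
          rw [abs_le]
          constructor <;> nlinarith [hrel]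
        have hmix : ((p : ℝ × ℝ).1 < 0 ∧ 0 < (φ t (p : ℝ × ℝ)).1) ∨
            ((φ t (p : ℝ × ℝ)).1 < 0 ∧ 0 < (p : ℝ × ℝ).1) →
            palaisCurve (p : ℝ × ℝ).1 ≤ palaisCurve b ∨
            palaisCurve (φ t (p : ℝ × ℝ)).1 ≤ palaisCurve b := by
          rintro (⟨-, hpos⟩ | ⟨-, hpos⟩)
          · right
            have hmul : (0:ℝ) ≤ (b - (φ t (p : ℝ × ℝ)).1) * (b + (φ t (p : ℝ × ℝ)).1) :=
              mul_nonneg (by linarith) (by linarith)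
            exact palaisCurve_le (by nlinarith) (by nlinarith)
          · left
            have hmul : (0:ℝ) ≤ (b - (p : ℝ × ℝ).1) * (b + (p : ℝ × ℝ).1) :=
              mul_nonneg (by linarith) (by linarith)
            exact palaisCurve_le (by nlinarith) (by nlinarith)
        have := palaisArc_bound hlt hx0b hx1.1 hx1.2 (by linarith) hL hF hmix
        rw [harc] at this
        exact this
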